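/- arXiv:1506.03330 — 3 statements merged into one kernel-verified Lean document; each statement's English description precedes it below -/
import Mathlib

section
/- Let d ≥ 2 be an integer and for each integer k ≥ 2 let λ_k be the unique real number with λ_k > d and (λ_k - d)(λ_k - 1)^{k-1} = d. Then the sequence {λ_k} is strictly decreasing, i.e., λ_{k+1} < λ_k for all k ≥ 2. -/
theorem sunflower_eigenvalue_strict_decreasing (d : ℕ) (hd : 2 ≤ d)
    (lam : ℕ → ℝ)
    (hgt : ∀ k, 2 ≤ k → lam k > d)
    (heq : ∀ k, 2 ≤ k → (lam k - d) * (lam k - 1) ^ (k - 1) = d) :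
    ∀ k, 2 ≤ k → lam (k + 1) < lam k := by
  intro k hk
  by_contra h
  push_neg at h
  have hd' : (2:ℝ) ≤ d := by exact_mod_cast hd
  have ha := hgt k hk
  have hb := hgt (k+1) (by omega)
  have e1 := heq k hk
  have e2 := heq (k+1) (by omega)
  simp only [Nat.add_sub_cancel] at e2
  set a := lam k with ha_def
  set b := lam (k+1) with hb_def
  -- a > d, b > d, a ≤ b
  have hpow : (a-1)^(k-1) ≤ (b-1)^(k-1) :=
    pow_le_pow_left₀ (by linarith) (by linarith) _
  have key : (a-d)*(a-1)^(k-1) ≤ (b-d)*(b-1)^(k-1) :=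
    mul_le_mul (by linarith) hpow (pow_nonneg (by linarith) _) (by linarith)
  rw [e1] at key
  obtain ⟨m, rfl⟩ : ∃ m, k = m + 1 := ⟨k-1, by omega⟩
  simp only [Nat.add_sub_cancel] at key e2
  have e2' : (b-d)*(b-1)^m*(b-1) = d := by
    rw [mul_assoc, ← pow_succ]; exact e2
  nlinarith [key, e2', hb, hd']
end

section
/- Let d ≥ 2 and k ≥ 2 be integers. Suppose real numbers λ, a, b with a > 0, b > 0 satisfy λ a^{k-1} = d a^{k-1} + d b^{k-1} and λ b^{k-1} = b^{k-1} + a b^{k-2}. Then (λ - d)(λ - 1)^{k-1} = d. -/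
theorem sunflower_elimination (d k : ℕ) (hd : 2 ≤ d) (hk : 2 ≤ k)
    (lam a b : ℝ) (ha : a > 0) (hb : b > 0)
    (h1 : lam * a ^ (k - 1) = d * a ^ (k - 1) + d * b ^ (k - 1))
    (h2 : lam * b ^ (k - 1) = b ^ (k - 1) + a * b ^ (k - 2)) :
    (lam - d) * (lam - 1) ^ (k - 1) = d := by
  have hb2 : (0:ℝ) < b ^ (k - 2) := pow_pos hb _
  have hk1 : k - 1 = (k - 2) + 1 := by omega
  simp only [hk1, pow_succ] at h1 h2 ⊢
  have hab : a = (lam - 1) * b := by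
    have h : (lam * b - (b + a)) * b ^ (k - 2) = 0 := by linarith [h2]; 
    rcases mul_eq_zero.1 h with h' | h'
    · linarith
    · exact absurd h' hb2.ne'
  subst hab
  have hbp : (0:ℝ) < b ^ (k - 2) * b := by positivity
  have key : ((lam - d) * ((lam - 1) ^ (k - 2) * (lam - 1)) - d) * (b ^ (k - 2) * b) = 0 := by
    have e : ((lam - 1) * b) ^ (k - 2) = (lam - 1) ^ (k - 2) * b ^ (k - 2) := mul_pow _ _ _
    rw [e] at h1
    nlinarith [h1]
  rcases mul_eq_zero.1 key with h' | h'
  · linarith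
  · exact absurd h' hbp.ne'
end

section
/- Let G be a simple graph with nonzero adjacency eigenvalue μ and eigenvector x (so that for every vertex v, the sum of x over the neighbors of v equals μ x_v). Fix integers k ≥ 3 and 1 ≤ s ≤ k/2 with μ > 0 and x positive. Define y on the vertex set of the generalized power hypergraph G^{k,s} by y_w = x_v^{2/k} if w lies in the set V_v associated to an original vertex v, and y_w = (μ^{-1} x_u x_v)^{1/k} if w lies in the set V_e associated to an edge e = {u,v}. Then for every vertex w of G^{k,s}, the sum over edges of G^{k,s} containing w of the product of y over the other k-1 vertices of that edge equals μ^{2s/k} · y_w^{k-1}. -/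
open Finset

/-- The vertex set of the generalized power hypergraph `G^{k,s}`:
for each vertex `v` of `G` a set `V_v` of `s` new vertices, and for each
edge `e` of `G` a set `V_e` of `k - 2s` new vertices. -/
def PowerVert {V : Type*} (G : SimpleGraph V) (k s : ℕ) : Type _ :=
  (V × Fin s) ⊕ (G.edgeSet × Fin (k - 2 * s))

noncomputable instance {V : Type*} [Fintype V] [DecidableEq V]
    (G : SimpleGraph V) [DecidableRel G.Adj] (k s : ℕ) :
    Fintype (PowerVert G k s) := by
  unfold PowerVert
  classical
  infer_instance

instance {V : Type*} [DecidableEq V] (G : SimpleGraph V) (k s : ℕ) :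
    DecidableEq (PowerVert G k s) := by
  unfold PowerVert; infer_instance

/-- The hyperedge `V_u ∪ V_v ∪ V_e` of `G^{k,s}` corresponding to the
edge `e = {u,v}` of `G`. -/
noncomputable def powerEdge {V : Type*} [Fintype V] [DecidableEq V]
    (G : SimpleGraph V) [DecidableRel G.Adj] (k s : ℕ) (e : G.edgeSet) :
    Finset (PowerVert G k s) := by
  classical
  exact Finset.univ.filter
    (fun w => Sum.elim (fun p => p.1 ∈ (e : Sym2 V)) (fun q => q.1 = e) w)

/-- The eigenvector `y` on `G^{k,s}` built from an eigenvector `x` of `A(G)`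
with eigenvalue `μ`:  `y_w = x_v^{2/k}` for `w ∈ V_v`, and
`y_w = (μ⁻¹ x_u x_v)^{1/k}` for `w ∈ V_e`, `e = {u,v}`. -/
noncomputable def powerVec {V : Type*} (G : SimpleGraph V) (k s : ℕ)
    (μ : ℝ) (x : V → ℝ) : PowerVert G k s → ℝ :=
  Sum.elim (fun p => x p.1 ^ ((2 : ℝ) / k))
    (fun q => (μ⁻¹ * Sym2.lift ⟨fun a b => x a * x b,
        fun a b => mul_comm _ _⟩ (q.1 : Sym2 V)) ^ ((1 : ℝ) / k))

/-! The product of `y` over a whole hyperedge `V_u ∪ V_v ∪ V_e` is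
`(x_u x_v)^{2s/k} (μ⁻¹ x_u x_v)^{(k-2s)/k} = μ^{2s/k} · μ⁻¹ x_u x_v`. Summed over the hyperedges
through `w` this gives `μ^{2s/k} y_w^k`: for `w ∈ V_v` by the eigenvalue equation
`∑_{u ~ v} x_u = μ x_v`, and for `w ∈ V_e` because `e` is the only hyperedge through `w` and
`y_w^k = μ⁻¹ x_u x_v`. Each term of the eigenvalue equation at `w` is such a full product divided
by `y_w > 0`, which leaves `μ^{2s/k} y_w^{k-1}`. -/

theorem Finset.mul_sum_prod_erase {ι α R : Type*} [DecidableEq α] [CommSemiring R]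
    (S : Finset ι) (E : ι → Finset α) (y : α → R) {w : α} (hw : ∀ e ∈ S, w ∈ E e) :
    y w * ∑ e ∈ S, ∏ t ∈ (E e).erase w, y t = ∑ e ∈ S, ∏ t ∈ E e, y t := by
  rw [Finset.mul_sum]
  exact Finset.sum_congr rfl fun e he => Finset.mul_prod_erase _ y (hw e he)

namespace SimpleGraph

variable {V : Type*} [Fintype V] [DecidableEq V] (G : SimpleGraph V) [DecidableRel G.Adj]

theorem sum_edge_mem_eq_sum_neighborFinset {M : Type*} [AddCommMonoid M] (v : V)
    (f : G.edgeSet → M) (g : V → M) (hfg : ∀ u (h : G.Adj v u), f ⟨s(v, u), h⟩ = g u) :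
    ∑ e ∈ univ.filter (fun e : G.edgeSet => v ∈ (e : Sym2 V)), f e
      = ∑ u ∈ G.neighborFinset v, g u := by
  symm
  refine Finset.sum_bij (fun u hu => ⟨s(v, u), (G.mem_neighborFinset v u).1 hu⟩) ?_ ?_ ?_ ?_
  · intro u _
    simp
  · intro u₁ _ u₂ _ h
    exact Sym2.congr_right.1 (congrArg Subtype.val h)
  · rintro ⟨e, he⟩ hv
    obtain ⟨u, rfl⟩ := Sym2.mem_iff_exists.1 (mem_filter.1 hv).2
    exact ⟨u, (G.mem_neighborFinset v u).2 he, rfl⟩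
  · intro u hu
    exact (hfg u _).symm

end SimpleGraph

section PowerHypergraph

variable {V : Type*} {G : SimpleGraph V} {k s : ℕ}

theorem powerVec_pos {μ : ℝ} (hμ : 0 < μ) {x : V → ℝ} (hx : ∀ v, 0 < x v)
    (w : PowerVert G k s) : 0 < powerVec G k s μ x w := by
  rcases w with ⟨v, i⟩ | ⟨⟨z, hz⟩, j⟩
  · exact Real.rpow_pos_of_pos (hx v) _
  · induction z using Sym2.ind with
    | _ u v =>
      exact Real.rpow_pos_of_pos (by simpa using mul_pos (inv_pos.2 hμ) (mul_pos (hx u) (hx v))) _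

theorem powerVec_inl_pow (hk : k ≠ 0) {μ : ℝ} {x : V → ℝ} (hx : ∀ v, 0 < x v) (v : V)
    (i : Fin s) : powerVec G k s μ x (Sum.inl (v, i)) ^ k = x v ^ 2 := by
  rw [powerVec, Sum.elim_inl, ← Real.rpow_mul_natCast (hx v).le,
    div_mul_cancel₀ _ (Nat.cast_ne_zero.2 hk), Real.rpow_two]

theorem powerVec_inr_pow (hk : k ≠ 0) {μ : ℝ} (hμ : 0 < μ) {x : V → ℝ} (hx : ∀ v, 0 < x v)
    {e : G.edgeSet} {u v : V} (he : (e : Sym2 V) = s(u, v)) (j : Fin (k - 2 * s)) :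
    powerVec G k s μ x (Sum.inr (e, j)) ^ k = μ⁻¹ * (x u * x v) := by
  rw [powerVec, Sum.elim_inr, he, Sym2.lift_mk, one_div,
    Real.rpow_inv_natCast_pow (by positivity [hx u, hx v]) hk]

variable [Fintype V] [DecidableEq V] [DecidableRel G.Adj]

theorem mem_powerEdge {e : G.edgeSet} {w : PowerVert G k s} :
    w ∈ powerEdge G k s e ↔ Sum.elim (fun p => p.1 ∈ (e : Sym2 V)) (fun q => q.1 = e) w := by
  classical exact mem_filter.trans (and_iff_right (mem_univ _))

theorem powerEdge_eq_disjSum {e : G.edgeSet} {u v : V} (he : (e : Sym2 V) = s(u, v)) :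
    powerEdge G k s e = (({u, v} : Finset V) ×ˢ univ).disjSum ({e} ×ˢ univ) := by
  ext (⟨a, i⟩ | ⟨f, j⟩)
  · refine mem_powerEdge.trans (Iff.trans ?_ inl_mem_disjSum.symm)
    simp [he]
  · refine mem_powerEdge.trans (Iff.trans ?_ inr_mem_disjSum.symm)
    simp [eq_comm]

theorem prod_powerVec_powerEdge (hk : k ≠ 0) (hs : 2 * s ≤ k) {μ : ℝ} (hμ : 0 < μ)
    {x : V → ℝ} (hx : ∀ v, 0 < x v) {e : G.edgeSet} {u v : V} (he : (e : Sym2 V) = s(u, v)) :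
    ∏ t ∈ powerEdge G k s e, powerVec G k s μ x t
      = μ ^ (2 * s / k : ℝ) * (μ⁻¹ * (x u * x v)) := by
  have huv : u ≠ v := G.ne_of_adj (by simpa [he] using e.2)
  rw [powerEdge_eq_disjSum he]
  refine (prod_disjSum _ _ _).trans ?_
  rw [prod_product, prod_product, prod_pair huv, prod_singleton]
  simp only [prod_const, card_univ, Fintype.card_fin, powerVec, Sum.elim_inl, Sum.elim_inr, he,
    Sym2.lift_mk]
  have hxy : 0 < x u * x v := mul_pos (hx u) (hx v)
  have hkR : (k : ℝ) ≠ 0 := Nat.cast_ne_zero.2 hk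
  rw [← Real.rpow_mul_natCast (hx u).le, ← Real.rpow_mul_natCast (hx v).le,
    ← Real.mul_rpow (hx u).le (hx v).le, ← Real.rpow_mul_natCast (by positivity),
    Real.mul_rpow (inv_nonneg.2 hμ.le) hxy.le, Real.inv_rpow hμ.le, ← Real.rpow_neg hμ.le,
    mul_left_comm, ← Real.rpow_add hxy, Nat.cast_sub hs]
  push_cast
  rw [show 2 / (k : ℝ) * s + 1 / k * (k - 2 * s) = 1 by field_simp; ring, Real.rpow_one,
    ← Real.rpow_neg_one]
  have hμk : μ ^ (-(1 / k * (k - 2 * s)) : ℝ) = μ ^ (2 * s / k : ℝ) * μ ^ (-1 : ℝ) := by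
    rw [← Real.rpow_add hμ]
    congr 1
    field_simp
    ring
  rw [hμk]
  ring

theorem sum_prod_powerEdge_of_mem (hk : k ≠ 0) (hs : 2 * s ≤ k) {μ : ℝ} (hμ : 0 < μ)
    {x : V → ℝ} (hx : ∀ v, 0 < x v) (heig : ∀ v, ∑ u ∈ G.neighborFinset v, x u = μ * x v)
    (v : V) :
    ∑ e ∈ univ.filter (fun e : G.edgeSet => v ∈ (e : Sym2 V)),
        ∏ t ∈ powerEdge G k s e, powerVec G k s μ x t = μ ^ (2 * s / k : ℝ) * x v ^ 2 := by
  rw [G.sum_edge_mem_eq_sum_neighborFinset v _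
      (fun u => μ ^ (2 * s / k : ℝ) * (μ⁻¹ * (x v * x u)))
      (fun u _ => prod_powerVec_powerEdge hk hs hμ hx rfl),
    ← mul_sum, ← mul_sum, ← mul_sum, heig]
  field_simp

theorem sum_prod_powerEdge (hk : k ≠ 0) (hs : 2 * s ≤ k) {μ : ℝ} (hμ : 0 < μ)
    {x : V → ℝ} (hx : ∀ v, 0 < x v) (heig : ∀ v, ∑ u ∈ G.neighborFinset v, x u = μ * x v)
    (w : PowerVert G k s) :
    ∑ e ∈ univ.filter (fun e : G.edgeSet => w ∈ powerEdge G k s e),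
        ∏ t ∈ powerEdge G k s e, powerVec G k s μ x t
      = μ ^ (2 * s / k : ℝ) * powerVec G k s μ x w ^ k := by
  rcases w with ⟨v, i⟩ | ⟨⟨z, hz⟩, j⟩
  · rw [powerVec_inl_pow hk hx, ← sum_prod_powerEdge_of_mem hk hs hμ hx heig]
    congr 1
    ext e
    simp only [mem_filter, mem_univ, true_and]
    exact mem_powerEdge
  · induction z using Sym2.ind with
    | _ u v =>
      rw [powerVec_inr_pow hk hμ hx rfl,
        ← prod_powerVec_powerEdge (e := ⟨s(u, v), hz⟩) hk hs hμ hx rfl,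
        ← sum_singleton (fun e => ∏ t ∈ powerEdge G k s e, powerVec G k s μ x t) ⟨s(u, v), hz⟩]
      congr 1
      ext e
      simp only [mem_filter, mem_univ, true_and, mem_singleton]
      exact mem_powerEdge.trans eq_comm

end PowerHypergraph

theorem powerVec_is_eigenvector_general {V : Type*} [Fintype V] [DecidableEq V]
    (G : SimpleGraph V) [DecidableRel G.Adj]
    (k s : ℕ) (hk : 3 ≤ k) (hs2 : 2 * s ≤ k)
    (μ : ℝ) (hμ : 0 < μ) (x : V → ℝ) (hx : ∀ v, 0 < x v)
    (heig : ∀ v, ∑ u ∈ G.neighborFinset v, x u = μ * x v) :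
    ∀ w : PowerVert G k s,
      ∑ e ∈ Finset.univ.filter (fun e : G.edgeSet => w ∈ powerEdge G k s e),
          ∏ t ∈ (powerEdge G k s e).erase w, powerVec G k s μ x t
        = μ ^ ((2 * (s : ℝ)) / k) * (powerVec G k s μ x w) ^ (k - 1) := by
  intro w
  apply mul_left_cancel₀ (powerVec_pos hμ hx w).ne'
  rw [mul_sum_prod_erase _ _ _ fun e he => (mem_filter.1 he).2,
    sum_prod_powerEdge (by omega) hs2 hμ hx heig, mul_left_comm, ← pow_succ',
    Nat.sub_add_cancel (by omega)]

/-- `y` is an eigenvector of the adjacency tensor of `G^{k,s}` with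
eigenvalue `μ^{2s/k}`: at every vertex `w` of `G^{k,s}`, the sum over the
hyperedges containing `w` of the product of `y` over the other `k - 1`
vertices equals `μ^{2s/k} · y_w^{k-1}`. -/
theorem powerVec_is_eigenvector {V : Type*} [Fintype V] [DecidableEq V]
    (G : SimpleGraph V) [DecidableRel G.Adj]
    (k s : ℕ) (hk : 3 ≤ k) (hs1 : 1 ≤ s) (hs2 : 2 * s ≤ k)
    (μ : ℝ) (hμ : 0 < μ) (x : V → ℝ) (hx : ∀ v, 0 < x v)
    (heig : ∀ v, ∑ u ∈ G.neighborFinset v, x u = μ * x v) :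
    ∀ w : PowerVert G k s,
      ∑ e ∈ Finset.univ.filter (fun e : G.edgeSet => w ∈ powerEdge G k s e),
          ∏ t ∈ (powerEdge G k s e).erase w, powerVec G k s μ x t
        = μ ^ ((2 * (s : ℝ)) / k) * (powerVec G k s μ x w) ^ (k - 1) :=
  powerVec_is_eigenvector_general G k s hk hs2 μ hμ x hx heig
end
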